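/- arXiv:2201.09046 — 4 statements merged into one kernel-verified Lean document; each statement's English description precedes it below -/
import Mathlib

section
/- Let h : ℝ^d → ℝ be a differentiable function attaining its minimum, and suppose h satisfies the Polyak–Łojasiewicz condition with constant μ > 0, i.e. for all w, (1/2)‖∇h(w)‖² ≥ μ (h(w) − inf h). Then for every w with h(w) > inf h, there exists a point w* with h(w*) = inf h such that h(w) − inf h ≥ (μ/2) ‖w − w*‖², provided h is L-smooth (gradient L-Lipschitz). -/
/-!
Put `g = √(f - m)` with `m = min f`. Where `f > m`, the PL inequality says exactly
`‖∇g‖ ≥ √(μ/2)`. For `c < √(μ/2)`, a minimizer `v` of `g + c‖· - w‖` (it exists since the space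
is proper) has `g u ≥ g v - c‖u - v‖` for all `u`, which would force `‖∇g v‖ ≤ c` if `g v > 0`;
so `g v = 0`, and `v` is a minimizer of `f` with `c‖w - v‖ ≤ g w`. Letting `c ↑ √(μ/2)` and taking a nearest point of the
closed set of minimizers gives `(μ/2)‖w - z‖² ≤ f w - m`.
-/

open Set Filter Topology

variable {E : Type*} [NormedAddCommGroup E]

theorem HasFDerivAt.opNorm_le_of_forall_sub_le [NormedSpace ℝ E] {g : E → ℝ} {g' : E →L[ℝ] ℝ}
    {v : E} {c : ℝ} (hg : HasFDerivAt g g' v) (hc : 0 ≤ c)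
    (hslope : ∀ u, g v - c * ‖u - v‖ ≤ g u) : ‖g'‖ ≤ c := by
  have key : ∀ y, -g' y ≤ c * ‖y‖ := by
    intro y
    set φ : ℝ → ℝ := fun t => g (v + t • y) + t * (c * ‖y‖)
    have hmin : IsMinOn φ (Ici 0) 0 := fun t (ht : 0 ≤ t) => by
      have := hslope (v + t • y)
      rw [add_sub_cancel_left, norm_smul, Real.norm_of_nonneg ht] at this
      show φ 0 ≤ φ t
      simp only [φ, zero_smul, add_zero, zero_mul]
      linarith
    have hφ : HasDerivAt φ (g' y + c * ‖y‖) 0 := by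
      have hline : HasDerivAt (fun t : ℝ => v + t • y) y 0 := by
        simpa using ((hasDerivAt_id (0 : ℝ)).smul_const y).const_add v
      exact (hg.comp_hasDerivAt_of_eq 0 hline (by simp)).add (hasDerivAt_mul_const _)
    have := hmin.localize.hasFDerivWithinAt_nonneg hφ.hasDerivWithinAt.hasFDerivWithinAt (y := 1)
      (mem_posTangentConeAt_of_segment_subset (by simp [segment_eq_Icc, Icc_subset_Ici_self]))
    simp only [ContinuousLinearMap.toSpanSingleton_apply, smul_eq_mul, one_mul] at this
    linarith
  refine ContinuousLinearMap.opNorm_le_bound g' hc fun y => abs_le.2 ⟨neg_le.1 (key y), ?_⟩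
  simpa using key (-y)

theorem Continuous.exists_ekeland_point [ProperSpace E] {g : E → ℝ} (hg : Continuous g)
    (hg0 : ∀ u, 0 ≤ g u) {c : ℝ} (hc : 0 < c) (w : E) :
    ∃ v, c * ‖w - v‖ ≤ g w ∧ ∀ u, g v - c * ‖u - v‖ ≤ g u := by
  obtain ⟨v, hv⟩ : ∃ v, ∀ u, g v + c * ‖v - w‖ ≤ g u + c * ‖u - w‖ := by
    refine (hg.add (continuous_const.mul (continuous_id.sub continuous_const).norm))
      |>.exists_forall_le' w ?_
    filter_upwards [(isCompact_closedBall w (g w / c)).compl_mem_cocompact] with u hu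
    rw [mem_compl_iff, Metric.mem_closedBall, not_le, dist_eq_norm, div_lt_iff₀' hc] at hu
    show g w + c * ‖w - w‖ ≤ g u + c * ‖u - w‖
    rw [sub_self, norm_zero, mul_zero, add_zero]
    linarith [hg0 u]
  refine ⟨v, ?_, fun u => ?_⟩
  · have := hv w
    rw [sub_self, norm_zero, mul_zero, add_zero, norm_sub_rev] at this
    linarith [hg0 v]
  · nlinarith [hv u, norm_sub_le_norm_sub_add_norm_sub u v w]

theorem eq_of_pl_of_forall_sqrt_sub_le [InnerProductSpace ℝ E] [CompleteSpace E] {f : E → ℝ}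
    {m μ c : ℝ} {v : E} (hf : DifferentiableAt ℝ f v) (hm : m ≤ f v)
    (hPL : μ * (f v - m) ≤ 1 / 2 * ‖gradient f v‖ ^ 2) (hc : 0 ≤ c) (hcμ : 2 * c ^ 2 < μ)
    (hslope : ∀ u, √(f v - m) - c * ‖u - v‖ ≤ √(f u - m)) : f v = m := by
  by_contra hne
  have hpos : 0 < f v - m := sub_pos.2 (lt_of_le_of_ne hm (Ne.symm hne))
  have hderiv := (hf.hasGradientAt.hasFDerivAt.sub_const m).sqrt hpos.ne'
  have hbound : ‖gradient f v‖ ≤ c * (2 * √(f v - m)) := by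
    have := hderiv.opNorm_le_of_forall_sub_le hc hslope
    rwa [norm_smul, LinearIsometryEquiv.norm_map, Real.norm_of_nonneg (by positivity),
      one_div_mul_eq_div, div_le_iff₀ (by positivity)] at this
  nlinarith [norm_nonneg (gradient f v), Real.sq_sqrt hpos.le]

theorem exists_eq_mul_norm_le_sqrt_of_pl [InnerProductSpace ℝ E] [ProperSpace E] {f : E → ℝ}
    {m μ c : ℝ} (hf : Differentiable ℝ f) (hm : ∀ u, m ≤ f u)
    (hPL : ∀ u, μ * (f u - m) ≤ 1 / 2 * ‖gradient f u‖ ^ 2) (hc : 0 < c) (hcμ : 2 * c ^ 2 < μ)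
    (w : E) : ∃ z, f z = m ∧ c * ‖w - z‖ ≤ √(f w - m) := by
  obtain ⟨z, hwz, hslope⟩ := (hf.continuous.sub continuous_const).sqrt.exists_ekeland_point
    (fun u => Real.sqrt_nonneg (f u - m)) hc w
  exact ⟨z, eq_of_pl_of_forall_sqrt_sub_le (hf z) (hm z) (hPL z) hc.le hcμ hslope, hwz⟩

theorem exists_eq_quadratic_growth_of_pl [InnerProductSpace ℝ E] [ProperSpace E] {f : E → ℝ}
    {m μ : ℝ} (hμ : 0 < μ) (hf : Differentiable ℝ f) (hm : ∀ u, m ≤ f u)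
    (hPL : ∀ u, μ * (f u - m) ≤ 1 / 2 * ‖gradient f u‖ ^ 2) (w : E) :
    ∃ z, f z = m ∧ μ / 2 * ‖w - z‖ ^ 2 ≤ f w - m := by
  set Z := {z | f z = m}
  have hr : 0 < √(μ / 2) := by positivity
  have hbound : ∀ c ∈ Ioo 0 √(μ / 2), c * Metric.infDist w Z ≤ √(f w - m) := by
    rintro c ⟨hc, hcμ⟩
    rw [Real.lt_sqrt hc.le] at hcμ
    obtain ⟨z, hz, hwz⟩ := exists_eq_mul_norm_le_sqrt_of_pl hf hm hPL hc (by linarith) w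
    rw [← dist_eq_norm] at hwz
    exact (mul_le_mul_of_nonneg_left (Metric.infDist_le_dist_of_mem (x := w) hz) hc.le).trans hwz
  have hZ : Z.Nonempty := by
    obtain ⟨z, hz, -⟩ := exists_eq_mul_norm_le_sqrt_of_pl hf hm hPL (half_pos hr)
      (by nlinarith [Real.sq_sqrt (half_pos hμ).le]) w
    exact ⟨z, hz⟩
  obtain ⟨z, hz, hdist⟩ :=
    (isClosed_eq hf.continuous continuous_const).exists_infDist_eq_dist hZ w
  have hlim : Tendsto (fun c => c * Metric.infDist w Z) (𝓝[<] √(μ / 2))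
      (𝓝 (√(μ / 2) * Metric.infDist w Z)) :=
    ((continuous_mul_const _).tendsto _).mono_left nhdsWithin_le_nhds
  have hle : √(μ / 2) * ‖w - z‖ ≤ √(f w - m) := by
    rw [← dist_eq_norm, ← hdist]
    exact le_of_tendsto hlim (eventually_of_mem (Ioo_mem_nhdsLT hr) hbound)
  refine ⟨z, hz, ?_⟩
  rwa [Real.le_sqrt (by positivity) (sub_nonneg.2 (hm w)), mul_pow,
    Real.sq_sqrt (half_pos hμ).le] at hle

theorem pl_implies_quadratic_growth_general
    {d : ℕ} (h : EuclideanSpace ℝ (Fin d) → ℝ) (μ : ℝ)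
    (hμ : 0 < μ)
    (hdiff : Differentiable ℝ h)
    (w0 : EuclideanSpace ℝ (Fin d)) (hmin : ∀ w, h w0 ≤ h w)
    (hPL : ∀ w, μ * (h w - h w0) ≤ (1 / 2) * ‖gradient h w‖ ^ 2) :
    ∀ w, h w0 < h w →
      ∃ wstar, h wstar = h w0 ∧ (μ / 2) * ‖w - wstar‖ ^ 2 ≤ h w - h w0 :=
  fun w _ => exists_eq_quadratic_growth_of_pl hμ hdiff hmin hPL w

/-- PL condition implies quadratic growth (for L-smooth differentiable functions
attaining their minimum). -/
theorem pl_implies_quadratic_growth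
    {d : ℕ} (h : EuclideanSpace ℝ (Fin d) → ℝ) (μ L : ℝ)
    (hμ : 0 < μ) (hL : 0 < L)
    (hdiff : Differentiable ℝ h)
    (hsmooth : ∀ x y, ‖gradient h x - gradient h y‖ ≤ L * ‖x - y‖)
    (w0 : EuclideanSpace ℝ (Fin d)) (hmin : ∀ w, h w0 ≤ h w)
    (hPL : ∀ w, μ * (h w - h w0) ≤ (1 / 2) * ‖gradient h w‖ ^ 2) :
    ∀ w, h w0 < h w →
      ∃ wstar, h wstar = h w0 ∧ (μ / 2) * ‖w - wstar‖ ^ 2 ≤ h w - h w0 :=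
  pl_implies_quadratic_growth_general h μ hμ hdiff w0 hmin hPL
end

section
/- Let f₁, …, fₙ : ℝ^{d2} → ℝ be differentiable functions each ρ-strongly concave and G-Lipschitz on a closed convex set V. Fix i ∈ [n], and let f'ᵢ be another ρ-strongly concave, G-Lipschitz differentiable function. Let v̂ maximize F(v) = (1/n)∑ⱼ fⱼ(v) over V and v̂' maximize F'(v) = F(v) + (1/n)(f'ᵢ(v) − fᵢ(v)) over V. Then ‖v̂ − v̂'‖ ≤ 4G/(ρn). -/
/-!
Strong concavity makes an objective grow quadratically away from its maximizer:
`ρ / 2 * ‖x̂ - y‖ ^ 2 ≤ F x̂ - F y`. Writing `F' = F + h` with `h = (f' - fᵢ) / n`, the growth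
inequalities of `F` at `v̂` and of `F'` at `v̂'` add up to
`ρ * ‖v̂ - v̂'‖ ^ 2 ≤ h v̂' - h v̂ ≤ (2 * G / n) * ‖v̂ - v̂'‖`. The strong concavity of `F'` comes
from writing it as the average of the family in which `fᵢ` is replaced by `f'`.
-/

open Finset Filter Topology

section StrongConcavity

variable {E : Type*} [NormedAddCommGroup E] [NormedSpace ℝ E] {V : Set E} {ρ : ℝ}

lemma StrongConcaveOn.const_mul {f : E → ℝ} {c : ℝ} (hc : 0 ≤ c) (hf : StrongConcaveOn V ρ f) :
    StrongConcaveOn V (c * ρ) (fun x ↦ c * f x) := by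
  refine ⟨hf.1, fun x hx y hy a b ha hb hab ↦ ?_⟩
  have h := mul_le_mul_of_nonneg_left (hf.2 hx hy ha hb hab) hc
  simp only [smul_eq_mul] at h ⊢
  linarith

lemma StrongConcaveOn.sum {ι : Type*} {s : Finset ι} {f : ι → E → ℝ} (hs : s.Nonempty)
    (hf : ∀ j ∈ s, StrongConcaveOn V ρ (f j)) :
    StrongConcaveOn V (#s * ρ) (fun x ↦ ∑ j ∈ s, f j x) := by
  obtain ⟨j₀, hj₀⟩ := hs
  refine ⟨(hf j₀ hj₀).1, fun x hx y hy a b ha hb hab ↦ ?_⟩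
  have h := sum_le_sum fun j hj ↦ (hf j hj).2 hx hy ha hb hab
  simp only [smul_eq_mul, sum_add_distrib, ← mul_sum, sum_const, nsmul_eq_mul] at h ⊢
  linarith

lemma StrongConcaveOn.average {ι : Type*} {s : Finset ι} {f : ι → E → ℝ} (hs : s.Nonempty)
    (hf : ∀ j ∈ s, StrongConcaveOn V ρ (f j)) :
    StrongConcaveOn V ρ (fun x ↦ (1 / #s : ℝ) * ∑ j ∈ s, f j x) := by
  have hcard : (1 / #s : ℝ) * (#s * ρ) = ρ := by
    field_simp [hs.card_pos.ne']
  simpa only [hcard] using (StrongConcaveOn.sum hs hf).const_mul (c := 1 / #s) (by positivity)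

lemma StrongConcaveOn.sq_norm_sub_le_of_isMaxOn {g : E → ℝ} {x y : E}
    (hg : StrongConcaveOn V ρ g) (hx : x ∈ V) (hy : y ∈ V) (hmax : IsMaxOn g V x) :
    ρ / 2 * ‖x - y‖ ^ 2 ≤ g x - g y := by
  -- Compare `x` with the points `t • y + (1 - t) • x` and let `t → 0⁺`.
  have hbound : ∀ t ∈ Set.Ioo (0 : ℝ) 1, (1 - t) * (ρ / 2 * ‖x - y‖ ^ 2) ≤ g x - g y := by
    rintro t ⟨ht₀, ht₁⟩
    have hconc := hg.2 hy hx ht₀.le (sub_nonneg.2 ht₁.le) (add_sub_cancel t 1)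
    have hle : g (t • y + (1 - t) • x) ≤ g x :=
      hmax (hg.1 hy hx ht₀.le (sub_nonneg.2 ht₁.le) (add_sub_cancel t 1))
    rw [norm_sub_rev] at hconc
    simp only [smul_eq_mul] at hconc
    nlinarith
  have hlim : Tendsto (fun t : ℝ ↦ (1 - t) * (ρ / 2 * ‖x - y‖ ^ 2)) (𝓝[>] 0)
      (𝓝 (ρ / 2 * ‖x - y‖ ^ 2)) := by
    have hcont : Continuous fun t : ℝ ↦ (1 - t) * (ρ / 2 * ‖x - y‖ ^ 2) := by fun_prop
    simpa using (hcont.tendsto 0).mono_left nhdsWithin_le_nhds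
  exact le_of_tendsto hlim (eventually_of_mem (Ioo_mem_nhdsGT zero_lt_one) hbound)

lemma norm_sub_le_of_isMaxOn_add {F h : E → ℝ} {x x' : E} {L : ℝ}
    (hρ : 0 < ρ) (hL : 0 ≤ L) (hF : StrongConcaveOn V ρ F)
    (hFh : StrongConcaveOn V ρ (fun v ↦ F v + h v))
    (hh : ∀ u ∈ V, ∀ w ∈ V, |h u - h w| ≤ L * ‖u - w‖)
    (hx : x ∈ V) (hx' : x' ∈ V) (hmax : IsMaxOn F V x)
    (hmax' : IsMaxOn (fun v ↦ F v + h v) V x') :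
    ‖x - x'‖ ≤ L / ρ := by
  have hgrowth := hF.sq_norm_sub_le_of_isMaxOn hx hx' hmax
  have hgrowth' := hFh.sq_norm_sub_le_of_isMaxOn hx' hx hmax'
  have hshift := (abs_le.1 (hh x' hx' x hx)).2
  rw [norm_sub_rev x'] at hgrowth' hshift
  have hquad : ρ * ‖x - x'‖ ^ 2 ≤ L * ‖x - x'‖ := by linarith
  rcases (norm_nonneg (x - x')).eq_or_lt with hzero | hpos
  · rw [← hzero]; positivity
  · rw [le_div_iff₀ hρ]; nlinarith

end StrongConcavity

lemma abs_const_mul_sub_sub_le {E : Type*} [SeminormedAddCommGroup E] {V : Set E}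
    {φ ψ : E → ℝ} {c G : ℝ} (hc : 0 ≤ c)
    (hφ : ∀ u ∈ V, ∀ w ∈ V, |φ u - φ w| ≤ G * ‖u - w‖)
    (hψ : ∀ u ∈ V, ∀ w ∈ V, |ψ u - ψ w| ≤ G * ‖u - w‖) :
    ∀ u ∈ V, ∀ w ∈ V, |c * (φ u - ψ u) - c * (φ w - ψ w)| ≤ 2 * c * G * ‖u - w‖ := by
  intro u hu w hw
  have hsub : |(φ u - ψ u) - (φ w - ψ w)| ≤ 2 * G * ‖u - w‖ := by
    rw [sub_sub_sub_comm]
    linarith [abs_sub (φ u - φ w) (ψ u - ψ w), hφ u hu w hw, hψ u hu w hw]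
  calc |c * (φ u - ψ u) - c * (φ w - ψ w)| = c * |(φ u - ψ u) - (φ w - ψ w)| := by
        rw [← mul_sub, abs_mul, abs_of_nonneg hc]
    _ ≤ c * (2 * G * ‖u - w‖) := by gcongr
    _ = 2 * c * G * ‖u - w‖ := by ring

lemma Finset.sum_update_apply {ι α : Type*} [Fintype ι] [DecidableEq ι] (f : ι → α → ℝ) (i : ι)
    (g : α → ℝ) (v : α) : ∑ j, Function.update f i g j v = ∑ j, f j v + (g v - f i v) := by
  have hrest : ∑ j ∈ univ.erase i, Function.update f i g j v = ∑ j ∈ univ.erase i, f j v :=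
    sum_congr rfl fun j hj ↦ by rw [Function.update_of_ne (ne_of_mem_erase hj)]
  rw [← add_sum_erase _ _ (mem_univ i), ← add_sum_erase univ (fun j ↦ f j v) (mem_univ i), hrest,
    Function.update_self]
  ring

theorem stability_of_strongly_concave_maximizer_general
    {d : ℕ} (n : ℕ)
    (f : Fin n → EuclideanSpace ℝ (Fin d) → ℝ)
    (i : Fin n) (f' : EuclideanSpace ℝ (Fin d) → ℝ)
    (ρ G : ℝ) (hρ : 0 < ρ) (hG : 0 ≤ G)
    (V : Set (EuclideanSpace ℝ (Fin d)))
    (hconc : ∀ j, StrongConcaveOn V ρ (f j)) (hconc' : StrongConcaveOn V ρ f')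
    (hlip : ∀ j, ∀ v ∈ V, ∀ v' ∈ V, |f j v - f j v'| ≤ G * ‖v - v'‖)
    (hlip' : ∀ v ∈ V, ∀ v' ∈ V, |f' v - f' v'| ≤ G * ‖v - v'‖)
    (vhat vhat' : EuclideanSpace ℝ (Fin d)) (hv : vhat ∈ V) (hv' : vhat' ∈ V)
    (hmax : IsMaxOn (fun v => (1 / n : ℝ) * ∑ j, f j v) V vhat)
    (hmax' : IsMaxOn
      (fun v => (1 / n : ℝ) * ∑ j, f j v + (1 / n : ℝ) * (f' v - f i v)) V vhat') :
    ‖vhat - vhat'‖ ≤ 4 * G / (ρ * n) := by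
  have hn : (0 : ℝ) < n := Nat.cast_pos.2 i.pos
  have hconcF : StrongConcaveOn V ρ (fun v => (1 / n : ℝ) * ∑ j, f j v) := by
    simpa using StrongConcaveOn.average ⟨i, mem_univ i⟩ fun j _ ↦ hconc j
  have hconcF' : StrongConcaveOn V ρ
      (fun v => (1 / n : ℝ) * ∑ j, f j v + (1 / n : ℝ) * (f' v - f i v)) := by
    have hupd : ∀ j ∈ univ, StrongConcaveOn V ρ (Function.update f i f' j) := by
      intro j _
      rcases eq_or_ne j i with rfl | hj
      · simpa using hconc'
      · simpa [hj] using hconc j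
    simpa [sum_update_apply, mul_add] using StrongConcaveOn.average ⟨i, mem_univ i⟩ hupd
  calc ‖vhat - vhat'‖ ≤ 2 * (1 / n) * G / ρ :=
        norm_sub_le_of_isMaxOn_add hρ (by positivity) hconcF hconcF'
          (abs_const_mul_sub_sub_le (by positivity) hlip' (hlip i)) hv hv' hmax hmax'
    _ = 2 * G / (ρ * n) := by field_simp
    _ ≤ 4 * G / (ρ * n) := by gcongr; norm_num

/-- Argument stability of the maximizer of an average of strongly concave
Lipschitz functions when one summand is replaced. -/
theorem stability_of_strongly_concave_maximizer
    {d : ℕ} (n : ℕ) (hn : 0 < n)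
    (f : Fin n → EuclideanSpace ℝ (Fin d) → ℝ)
    (i : Fin n) (f' : EuclideanSpace ℝ (Fin d) → ℝ)
    (ρ G : ℝ) (hρ : 0 < ρ) (hG : 0 ≤ G)
    (V : Set (EuclideanSpace ℝ (Fin d))) (hVc : IsClosed V) (hV : Convex ℝ V)
    (hdiff : ∀ j, Differentiable ℝ (f j)) (hdiff' : Differentiable ℝ f')
    (hconc : ∀ j, StrongConcaveOn V ρ (f j)) (hconc' : StrongConcaveOn V ρ f')
    (hlip : ∀ j, ∀ v ∈ V, ∀ v' ∈ V, |f j v - f j v'| ≤ G * ‖v - v'‖)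
    (hlip' : ∀ v ∈ V, ∀ v' ∈ V, |f' v - f' v'| ≤ G * ‖v - v'‖)
    (vhat vhat' : EuclideanSpace ℝ (Fin d)) (hv : vhat ∈ V) (hv' : vhat' ∈ V)
    (hmax : IsMaxOn (fun v => (1 / n : ℝ) * ∑ j, f j v) V vhat)
    (hmax' : IsMaxOn
      (fun v => (1 / n : ℝ) * ∑ j, f j v + (1 / n : ℝ) * (f' v - f i v)) V vhat') :
    ‖vhat - vhat'‖ ≤ 4 * G / (ρ * n) :=
  stability_of_strongly_concave_maximizer_general n f i f' ρ G hρ hG V hconc hconc' hlip hlip' vhat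
    vhat' hv hv' hmax hmax'
end

section
/- Let F : ℝ^{d1} × V → ℝ be differentiable, where V ⊆ ℝ^{d2} is closed, convex and bounded, F(w,·) is ρ-strongly concave for every w, and suppose for each w the map w ↦ ∇_v F(w, v) is L-Lipschitz in w uniformly in v and v ↦ ∇_v F(w,v) is L-Lipschitz. Let v̂(w) = argmax_{v ∈ V} F(w, v) (well-defined by strong concavity). Then the map w ↦ v̂(w) is (L/ρ)-Lipschitz: ‖v̂(w) − v̂(w')‖ ≤ (L/ρ)‖w − w'‖ for all w, w'. -/
/-!
Write `v = v̂ w` and `v' = v̂ w'`. Strong concavity makes each maximizer a point of quadratic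
growth, `F w u + ρ/2 ‖u - v‖² ≤ F w v` on `V`, and likewise for `w'`. Adding the two growth
inequalities bounds `ρ ‖v - v'‖²` by the increment of `F w - F w'` between `v'` and `v`. By the
mean value inequality this increment is at most `L ‖w - w'‖ ‖v - v'‖`, since the gradient of
`F w - F w'` is `L ‖w - w'‖`-small everywhere. Dividing by `‖v - v'‖` gives the claim.
-/

open Filter Set
open scoped NNReal

section StrongConcave

variable {E : Type*} [NormedAddCommGroup E] [NormedSpace ℝ E] {s : Set E} {m : ℝ}

lemma StrongConcaveOn.add_le_of_isMaxOn {f : E → ℝ} {x u : E} (hf : StrongConcaveOn s m f)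
    (hx : x ∈ s) (hmax : IsMaxOn f s x) (hu : u ∈ s) :
    f u + m / 2 * ‖u - x‖ ^ 2 ≤ f x := by
  set c := m / 2 * ‖u - x‖ ^ 2
  have hsegment : ∀ a ∈ Ioo (0 : ℝ) 1, f u - f x + (1 - a) * c ≤ 0 := by
    rintro a ⟨ha0, ha1⟩
    have hb : 0 ≤ 1 - a := sub_nonneg.2 ha1.le
    have hsum : a + (1 - a) = 1 := by ring
    have hconc := hf.2 hu hx ha0.le hb hsum
    have hle : f (a • u + (1 - a) • x) ≤ f x := hmax (hf.1 hu hx ha0.le hb hsum)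
    have hscaled : a * (f u - f x + (1 - a) * c) ≤ 0 := by
      simp only [smul_eq_mul] at hconc
      linear_combination hconc + hle
    exact nonpos_of_mul_nonpos_right hscaled ha0
  have hcont : Continuous fun a : ℝ ↦ f u - f x + (1 - a) * c := by fun_prop
  have hlim : f u - f x + (1 - 0) * c ≤ 0 :=
    le_of_tendsto ((hcont.tendsto 0).mono_left nhdsWithin_le_nhds)
      (eventually_of_mem (Ioo_mem_nhdsGT one_pos) hsegment)
  linarith

lemma StrongConcaveOn.mul_norm_sub_le_of_lipschitzOnWith_sub {f g : E → ℝ} {x y : E} {K : ℝ≥0}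
    (hf : StrongConcaveOn s m f) (hg : StrongConcaveOn s m g)
    (hx : x ∈ s) (hfx : IsMaxOn f s x) (hy : y ∈ s) (hgy : IsMaxOn g s y)
    (hK : LipschitzOnWith K (f - g) s) :
    m * ‖x - y‖ ≤ K := by
  have hgrowth_f := hf.add_le_of_isMaxOn hx hfx hy
  have hgrowth_g := hg.add_le_of_isMaxOn hy hgy hx
  have hincr : (f x - g x) - (f y - g y) ≤ K * ‖x - y‖ := by
    simpa only [Real.dist_eq, dist_eq_norm, Pi.sub_apply] using
      (le_abs_self _).trans (hK.dist_le_mul x hx y hy)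
  have hquad : m * ‖x - y‖ * ‖x - y‖ ≤ K * ‖x - y‖ := by
    rw [norm_sub_rev y x] at hgrowth_f
    nlinarith
  rcases (norm_nonneg (x - y)).eq_or_lt with hxy | hxy
  · simp [← hxy]
  · exact le_of_mul_le_mul_right hquad hxy

end StrongConcave

lemma lipschitzWith_sub_of_norm_gradient_sub_le {F : Type*} [NormedAddCommGroup F]
    [InnerProductSpace ℝ F] [CompleteSpace F] {f g : F → ℝ} {K : ℝ≥0}
    (hf : Differentiable ℝ f) (hg : Differentiable ℝ g)
    (hbound : ∀ x, ‖gradient f x - gradient g x‖ ≤ K) :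
    LipschitzWith K (f - g) := by
  refine lipschitzWith_of_nnnorm_fderiv_le (hf.sub hg) fun x ↦ ?_
  rw [← NNReal.coe_le_coe, coe_nnnorm, fderiv_sub (hf x) (hg x),
    ← (InnerProductSpace.toDual ℝ F).symm.norm_map, map_sub]
  exact hbound x

theorem argmax_map_lipschitz_general
    {d1 d2 : ℕ}
    (F : EuclideanSpace ℝ (Fin d1) → EuclideanSpace ℝ (Fin d2) → ℝ)
    (V : Set (EuclideanSpace ℝ (Fin d2)))
    (ρ L : ℝ) (hρ : 0 < ρ)
    (hdiff : Differentiable ℝ (fun p : EuclideanSpace ℝ (Fin d1) × EuclideanSpace ℝ (Fin d2) => F p.1 p.2))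
    (hconc : ∀ w, StrongConcaveOn V ρ (F w))
    (hlipw : ∀ v w w', ‖gradient (fun v' => F w v') v - gradient (fun v' => F w' v') v‖ ≤ L * ‖w - w'‖)
    (vhat : EuclideanSpace ℝ (Fin d1) → EuclideanSpace ℝ (Fin d2))
    (hvhat : ∀ w, vhat w ∈ V ∧ IsMaxOn (F w) V (vhat w)) :
    ∀ w w', ‖vhat w - vhat w'‖ ≤ (L / ρ) * ‖w - w'‖ := by
  intro w w'
  have hpartial : ∀ u, Differentiable ℝ (F u) := fun u ↦
    hdiff.comp ((differentiable_const u).prodMk differentiable_id)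
  have hK : 0 ≤ L * ‖w - w'‖ := (norm_nonneg _).trans (hlipw (vhat w) w w')
  have hlip : LipschitzWith ⟨L * ‖w - w'‖, hK⟩ (F w - F w') :=
    lipschitzWith_sub_of_norm_gradient_sub_le (hpartial w) (hpartial w') fun v ↦ hlipw v w w'
  have hmain := (hconc w).mul_norm_sub_le_of_lipschitzOnWith_sub (hconc w')
    (hvhat w).1 (hvhat w).2 (hvhat w').1 (hvhat w').2 hlip.lipschitzOnWith
  rw [div_mul_eq_mul_div, le_div_iff₀ hρ, mul_comm]
  exact hmain

/-- Lipschitz continuity of the argmax map for a smooth, strongly concave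
maximization over a closed bounded convex set. -/
theorem argmax_map_lipschitz
    {d1 d2 : ℕ}
    (F : EuclideanSpace ℝ (Fin d1) → EuclideanSpace ℝ (Fin d2) → ℝ)
    (V : Set (EuclideanSpace ℝ (Fin d2)))
    (hVc : IsClosed V) (hV : Convex ℝ V) (hVb : Bornology.IsBounded V)
    (hVne : V.Nonempty)
    (ρ L : ℝ) (hρ : 0 < ρ) (hL : 0 < L)
    (hdiff : Differentiable ℝ (fun p : EuclideanSpace ℝ (Fin d1) × EuclideanSpace ℝ (Fin d2) => F p.1 p.2))
    (hconc : ∀ w, StrongConcaveOn V ρ (F w))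
    (hlipw : ∀ v w w', ‖gradient (fun v' => F w v') v - gradient (fun v' => F w' v') v‖ ≤ L * ‖w - w'‖)
    (hlipv : ∀ w v v', ‖gradient (fun v'' => F w v'') v - gradient (fun v'' => F w v'') v'‖ ≤ L * ‖v - v'‖)
    (vhat : EuclideanSpace ℝ (Fin d1) → EuclideanSpace ℝ (Fin d2))
    (hvhat : ∀ w, vhat w ∈ V ∧ IsMaxOn (F w) V (vhat w)) :
    ∀ w w', ‖vhat w - vhat w'‖ ≤ (L / ρ) * ‖w - w'‖ :=
  argmax_map_lipschitz_general F V ρ L hρ hdiff hconc hlipw vhat hvhat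
end

section
/- Let F : ℝ^{d1} × V → ℝ be differentiable with V closed convex bounded, F(w,·) ρ-strongly concave for every w, ∇F jointly L-Lipschitz, and suppose F(·, v) satisfies the μ-PL condition for every fixed v, i.e. (1/2)‖∇_w F(w,v)‖² ≥ μ (F(w,v) − min_{w'} F(w',v)). Define R(w) = max_{v ∈ V} F(w, v). Assuming ∇R(w) = ∇_w F(w, v̂(w)) where v̂(w) = argmax_{v∈V} F(w,v) (Danskin's theorem), R satisfies the μ-PL condition: (1/2)‖∇R(w)‖² ≥ μ (R(w) − min_{w'} R(w')). -/
/-!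
Fix `w` and freeze the dual variable at its maximiser `v̂ = vhat w`. The minorant `g = F(·, v̂)`
of `R` touches `R` at `w` and, by Danskin, has the same gradient there; since `g ≤ R` everywhere,
`inf g ≤ inf R`, so the PL inequality of `g` at `w` is the PL inequality of `R` at `w`.
-/

open Set

theorem pl_of_le_of_eq_of_gradient_eq {E : Type*} [NormedAddCommGroup E] [InnerProductSpace ℝ E]
    [CompleteSpace E] {f g : E → ℝ} {μ : ℝ} {w : E} (hμ : 0 ≤ μ) (hg : BddBelow (range g))
    (hle : ∀ x, g x ≤ f x) (heq : f w = g w) (hgrad : gradient f w = gradient g w)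
    (hPL : μ * (g w - sInf (range g)) ≤ 1 / 2 * ‖gradient g w‖ ^ 2) :
    μ * (f w - sInf (range f)) ≤ 1 / 2 * ‖gradient f w‖ ^ 2 := by
  have hinf : sInf (range g) ≤ sInf (range f) := ciInf_mono hg hle
  calc μ * (f w - sInf (range f)) ≤ μ * (g w - sInf (range g)) := by
        rw [heq]; gcongr
    _ ≤ 1 / 2 * ‖gradient g w‖ ^ 2 := hPL
    _ = 1 / 2 * ‖gradient f w‖ ^ 2 := by rw [hgrad]

theorem primal_function_PL_general
    {d1 d2 : ℕ}
    (F : EuclideanSpace ℝ (Fin d1) → EuclideanSpace ℝ (Fin d2) → ℝ)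
    (V : Set (EuclideanSpace ℝ (Fin d2)))
    (μ : ℝ) (hμ : 0 < μ)
    (vhat : EuclideanSpace ℝ (Fin d1) → EuclideanSpace ℝ (Fin d2))
    (hvhat : ∀ w, vhat w ∈ V ∧ IsMaxOn (F w) V (vhat w))
    (R : EuclideanSpace ℝ (Fin d1) → ℝ) (hR : ∀ w, R w = F w (vhat w))
    -- lower boundedness so that the infima are finite
    (hbdd : ∀ v, BddBelow (Set.range fun w => F w v))
    -- PL condition for F(·, v), for every fixed v
    (hPL : ∀ w v, μ * (F w v - sInf (Set.range fun w' => F w' v))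
      ≤ (1 / 2) * ‖gradient (fun w' => F w' v) w‖ ^ 2)
    -- Danskin's theorem
    (hDanskin : ∀ w, gradient R w = gradient (fun w' => F w' (vhat w)) w) :
    ∀ w, μ * (R w - sInf (Set.range R)) ≤ (1 / 2) * ‖gradient R w‖ ^ 2 := by
  intro w
  have hminorant : ∀ x, F x (vhat w) ≤ R x := fun x => by
    rw [hR x]
    exact (hvhat x).2 (hvhat w).1
  exact pl_of_le_of_eq_of_gradient_eq hμ.le (hbdd (vhat w)) hminorant (hR w) (hDanskin w)
    (hPL w (vhat w))

/-- If F(·,v) satisfies the μ-PL condition for every v and F(w,·) is strongly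
concave over the bounded closed convex set V, then the primal function
R(w) = max_{v ∈ V} F(w,v) also satisfies the μ-PL condition
(assuming Danskin's identity for ∇R). -/
theorem primal_function_PL
    {d1 d2 : ℕ}
    (F : EuclideanSpace ℝ (Fin d1) → EuclideanSpace ℝ (Fin d2) → ℝ)
    (V : Set (EuclideanSpace ℝ (Fin d2)))
    (hVc : IsClosed V) (hV : Convex ℝ V) (hVb : Bornology.IsBounded V)
    (hVne : V.Nonempty)
    (ρ L μ : ℝ) (hρ : 0 < ρ) (hL : 0 < L) (hμ : 0 < μ)
    (hdiff : Differentiable ℝ (fun p : EuclideanSpace ℝ (Fin d1) × EuclideanSpace ℝ (Fin d2) => F p.1 p.2))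
    (hconc : ∀ w, StrongConcaveOn V ρ (F w))
    (hsmooth : ∀ w v w' v',
      ‖gradient (fun w'' => F w'' v) w - gradient (fun w'' => F w'' v') w'‖ ^ 2
        + ‖gradient (fun v'' => F w v'') v - gradient (fun v'' => F w' v'') v'‖ ^ 2
      ≤ L ^ 2 * (‖w - w'‖ ^ 2 + ‖v - v'‖ ^ 2))
    (vhat : EuclideanSpace ℝ (Fin d1) → EuclideanSpace ℝ (Fin d2))
    (hvhat : ∀ w, vhat w ∈ V ∧ IsMaxOn (F w) V (vhat w))
    (R : EuclideanSpace ℝ (Fin d1) → ℝ) (hR : ∀ w, R w = F w (vhat w))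
    -- lower boundedness so that the infima are finite
    (hbdd : ∀ v, BddBelow (Set.range fun w => F w v))
    (hbddR : BddBelow (Set.range R))
    -- PL condition for F(·, v), for every fixed v
    (hPL : ∀ w v, μ * (F w v - sInf (Set.range fun w' => F w' v))
      ≤ (1 / 2) * ‖gradient (fun w' => F w' v) w‖ ^ 2)
    -- Danskin's theorem
    (hDanskin : ∀ w, gradient R w = gradient (fun w' => F w' (vhat w)) w) :
    ∀ w, μ * (R w - sInf (Set.range R)) ≤ (1 / 2) * ‖gradient R w‖ ^ 2 :=
  primal_function_PL_general F V μ hμ vhat hvhat R hR hbdd hPL hDanskin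
end
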